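/- arXiv:2102.08677 — 6 statements merged into one kernel-verified Lean document; each statement's English description precedes it below -/
import Mathlib

section
/- Let n ≥ 1 tasks and m ≥ 1 machines be given, and let B = ∏_{i=1}^n [l_i, u_i] ⊆ ℝ^n be a box uncertainty set with l_i ≤ u_i for every i. Then min_{f} sup_{d ∈ B} mk(f, d) = sup_{d ∈ B} min_{f} mk(f, d), where both min's range over all assignments f : {1,…,n} → {1,…,m}, and moreover both quantities equal min_{f} mk(f, u), the optimal deterministic makespan at the upper-corner duration vector u = (u_1,…,u_n). (Hence under box uncertainty the optimal static allocation attains the same worst-case makespan as the perfect-hindsight benchmark, which sandwiches every adaptive policy.) -/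
open Finset

/-- Makespan of assignment `f` of `n` tasks to `m` machines under durations `d`. -/
noncomputable def mk {n m : ℕ} (f : Fin n → Fin m) (d : Fin n → ℝ) : ℝ :=
  ⨆ j : Fin m, ∑ i ∈ Finset.univ.filter (fun i => f i = j), d i

/-- Two-machine makespan of allocation `x` under durations `d`. -/
noncomputable def M2 {n : ℕ} (x : Fin n → Bool) (d : Fin n → ℝ) : ℝ :=
  max (∑ i ∈ Finset.univ.filter (fun i => x i = true), d i)
      (∑ i ∈ Finset.univ.filter (fun i => x i = false), d i)

/-- Budgeted uncertainty set `U(d⁰, α, Γ)`. -/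
def budgetU {n : ℕ} (d0 : Fin n → ℝ) (α Γ : ℝ) : Set (Fin n → ℝ) :=
  { d | ∃ u : Fin n → ℝ, (∀ i, u i ∈ Set.Icc (0:ℝ) 1) ∧
        (∀ i, d i = d0 i * (1 + α * u i)) ∧ (∑ i, u i) ≤ Γ }

/-- Static-allocation worst-case makespan on two machines. -/
noncomputable def SA {n : ℕ} (U : Set (Fin n → ℝ)) : ℝ :=
  ⨅ x : Fin n → Bool, sSup ((fun d => M2 x d) '' U)

/-- Perfect-hindsight worst-case makespan on two machines. -/
noncomputable def PH {n : ℕ} (U : Set (Fin n → ℝ)) : ℝ :=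
  sSup ((fun d => ⨅ x : Fin n → Bool, M2 x d) '' U)

/-- `kthLargest S c k` is the `k`-th largest value (1-based) among `(c i)_{i ∈ S}`,
with value `0` when `k > |S|` (in particular `c^S_{(|S|+1)} = 0`). -/
noncomputable def kthLargest {n : ℕ} (S : Finset (Fin n)) (c : Fin n → ℝ) (k : ℕ) : ℝ :=
  ((S.val.map c).sort (· ≥ ·)).getD (k - 1) 0

lemma mk_mono {n m : ℕ} (f : Fin n → Fin m) {d d' : Fin n → ℝ}
    (h : ∀ i, d i ≤ d' i) : _root_.mk f d ≤ _root_.mk f d' := by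
  unfold _root_.mk
  exact ciSup_mono (Set.Finite.bddAbove (Set.finite_range _))
    (fun j => Finset.sum_le_sum (fun i _ => h i))

/-- under a box uncertainty set, the min-sup (static allocation) and
sup-min (perfect hindsight) worst-case makespans coincide, and both equal the optimal
deterministic makespan at the upper corner `u`. -/
theorem box_static_equals_perfect_hindsight
    (n m : ℕ) (hn : 1 ≤ n) (hm : 1 ≤ m)
    (l u : Fin n → ℝ) (hlu : ∀ i, l i ≤ u i)
    (B : Set (Fin n → ℝ)) (hB : B = { d | ∀ i, d i ∈ Set.Icc (l i) (u i) }) :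
    (⨅ f : Fin n → Fin m, sSup ((fun d => mk f d) '' B)) =
      sSup ((fun d => ⨅ f : Fin n → Fin m, mk f d) '' B) ∧
    (⨅ f : Fin n → Fin m, sSup ((fun d => mk f d) '' B)) =
      ⨅ f : Fin n → Fin m, mk f u := by
  haveI : Nonempty (Fin m) := Fin.pos_iff_nonempty.mp hm
  have huB : u ∈ B := by rw [hB]; exact fun i => ⟨hlu i, le_rfl⟩
  have hdu : ∀ d ∈ B, ∀ i, d i ≤ u i := by
    intro d hd i; rw [hB] at hd; exact (hd i).2
  have key : ∀ f : Fin n → Fin m, sSup ((fun d => mk f d) '' B) = mk f u := by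
    intro f
    apply le_antisymm
    · exact csSup_le ⟨mk f u, ⟨u, huB, rfl⟩⟩
        (by rintro y ⟨d, hd, rfl⟩; exact mk_mono f (hdu d hd))
    · exact le_csSup ⟨mk f u, by rintro y ⟨d, hd, rfl⟩; exact mk_mono f (hdu d hd)⟩
        ⟨u, huB, rfl⟩
  have hinf : ∀ d ∈ B, (⨅ f : Fin n → Fin m, mk f d) ≤ ⨅ f : Fin n → Fin m, mk f u := by
    intro d hd
    exact ciInf_mono (Set.Finite.bddBelow (Set.finite_range _))
      (fun f => mk_mono f (hdu d hd))
  have key2 : sSup ((fun d => ⨅ f : Fin n → Fin m, mk f d) '' B)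
      = ⨅ f : Fin n → Fin m, mk f u := by
    apply le_antisymm
    · exact csSup_le ⟨_, ⟨u, huB, rfl⟩⟩ (by rintro y ⟨d, hd, rfl⟩; exact hinf d hd)
    · exact le_csSup ⟨_, by rintro y ⟨d, hd, rfl⟩; exact hinf d hd⟩ ⟨u, huB, rfl⟩
  have heq : (⨅ f : Fin n → Fin m, sSup ((fun d => mk f d) '' B))
      = ⨅ f : Fin n → Fin m, mk f u := iInf_congr key
  exact ⟨heq.trans key2.symm, heq⟩
end

section
/- Let n ≥ 2, let d⁰ ∈ ℝ^n satisfy d⁰_i > 0 for all i, let α > 0 and 0 ≤ Γ ≤ n, and let U = U(d⁰, α, Γ) be the budgeted uncertainty set. Let x̃ ∈ {0,1}^n minimize M(x, d⁰) over all x ∈ {0,1}^n, set I = {i : x̃_i = 1} and Ī = {i : x̃_i = 0}, and assume both I and Ī are nonempty. For S ∈ {I, Ī} put K_S = min(|S|, ⌊Γ⌋) and Δ_S = min(Γ, |S|) − min(⌊Γ⌋, |S|). Then SA(U) ≤ (n / (n + Γα)) · ( 1 + α · max_{S ∈ {I, Ī}} ( ( ∑_{k=1}^{K_S} (d⁰)^S_{(k)}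 + Δ_S · (d⁰)^S_{(K_S + 1)} ) / ( ∑_{i ∈ S} d⁰_i ) ) ) · PH(U). -/
open Finset

/- ### Auxiliary lemmas -/

lemma sum_Icc_one (f : ℕ → ℝ) (K : ℕ) :
    ∑ k ∈ Finset.Icc 1 K, f k = ∑ j ∈ Finset.range K, f (j + 1) := by
  induction K with
  | zero => simp
  | succ K ih =>
      rw [Finset.sum_Icc_succ_top (by omega), ih, Finset.sum_range_succ]

lemma sum_g_sorted {n : ℕ} (S : Finset (Fin n)) (c : Fin n → ℝ) (g : ℝ → ℝ) :
    ∑ i ∈ S, g (c i) =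
      ∑ j ∈ Finset.range ((S.val.map c).sort (· ≥ ·)).length,
        g (((S.val.map c).sort (· ≥ ·)).getD j 0) := by
  set l := (S.val.map c).sort (· ≥ ·) with hl
  have h1 : ∑ i ∈ S, g (c i) = ((S.val.map c).map g).sum := by
    rw [Finset.sum, Multiset.map_map]; rfl
  have h2 : (S.val.map c) = (↑l : Multiset ℝ) := (Multiset.sort_eq _ _).symm
  rw [h1, h2]
  rw [show ((↑l : Multiset ℝ).map g) = ((l.map g : List ℝ) : Multiset ℝ) from rfl,
    Multiset.sum_coe]
  have hgen : ∀ L : List ℝ, L.sum = ∑ j ∈ Finset.range L.length, L.getD j 0 := by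
    intro L
    induction L with
    | nil => simp
    | cons a L ih => rw [List.sum_cons, ih, List.length_cons, Finset.sum_range_succ']; simp [add_comm]
  rw [hgen (l.map g)]
  simp only [List.length_map]
  refine Finset.sum_congr rfl fun j hj => ?_
  simp only [Finset.mem_range] at hj
  rw [List.getD_eq_getElem (l.map g) 0 (by simpa using hj), List.getElem_map,
    List.getD_eq_getElem l 0 hj]

/-- The key budget lemma: the adversary's weighted gain is at most the sum of the
`⌊Γ⌋` largest coefficients plus the fractional part times the next one. -/
lemma budget_bound {n : ℕ} (S : Finset (Fin n)) (c : Fin n → ℝ) (hc : ∀ i, 0 < c i)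
    (Γ : ℝ) (hΓ : 0 ≤ Γ) (u : Fin n → ℝ) (hu : ∀ i, u i ∈ Set.Icc (0:ℝ) 1)
    (hsum : ∑ i ∈ S, u i ≤ Γ) :
    ∑ i ∈ S, c i * u i ≤
      (∑ k ∈ Finset.Icc 1 (min S.card ⌊Γ⌋₊), kthLargest S c k) +
        (min Γ (S.card : ℝ) - min (⌊Γ⌋₊ : ℝ) (S.card : ℝ)) *
          kthLargest S c (min S.card ⌊Γ⌋₊ + 1) := by
  set l := (S.val.map c).sort (· ≥ ·) with hl
  have hlen : l.length = S.card := by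
    rw [hl, Multiset.length_sort, Multiset.card_map]; rfl
  set m := S.card with hm
  set K := min m ⌊Γ⌋₊ with hK
  have hKm : K ≤ m := min_le_left _ _
  set t := l.getD K 0 with ht
  have hmem_nonneg : ∀ x ∈ l, 0 ≤ x := by
    intro x hx
    rw [hl, Multiset.mem_sort] at hx
    obtain ⟨i, _, rfl⟩ := Multiset.mem_map.1 hx
    exact (hc i).le
  have ht0 : 0 ≤ t := by
    rcases lt_or_ge K l.length with h | h
    · rw [ht, List.getD_eq_getElem l 0 h]; exact hmem_nonneg _ (List.getElem_mem h)
    · rw [ht, List.getD_eq_default l 0 h]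
  have hsorted : l.Pairwise (· ≥ ·) := Multiset.pairwise_sort _ _
  -- indices below K dominate t, indices ≥ K are dominated by t
  have hge : ∀ j < K, t ≤ l.getD j 0 := by
    intro j hj
    have hjl : j < l.length := by omega
    rcases lt_or_ge K l.length with h | h
    · rw [ht, List.getD_eq_getElem l 0 h, List.getD_eq_getElem l 0 hjl]
      exact hsorted.rel_get_of_lt (a := ⟨j, hjl⟩) (b := ⟨K, h⟩) hj
    · rw [ht, List.getD_eq_default l 0 h]
      rw [List.getD_eq_getElem l 0 hjl]
      exact hmem_nonneg _ (List.getElem_mem hjl)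
  have hle : ∀ j, K ≤ j → j < l.length → l.getD j 0 ≤ t := by
    intro j hKj hjl
    have h : K < l.length := lt_of_le_of_lt hKj hjl
    rw [ht, List.getD_eq_getElem l 0 h, List.getD_eq_getElem l 0 hjl]
    exact hsorted.rel_get_of_le (a := ⟨K, h⟩) (b := ⟨j, hjl⟩) hKj
  -- step 1: pointwise bound
  have step1 : ∑ i ∈ S, c i * u i ≤ t * (∑ i ∈ S, u i) + ∑ i ∈ S, max (c i - t) 0 := by
    rw [Finset.mul_sum, ← Finset.sum_add_distrib]
    refine Finset.sum_le_sum fun i _ => ?_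
    have h1 := (hu i).1; have h2 := (hu i).2
    rcases le_or_gt t (c i) with h | h
    · nlinarith [le_max_left (c i - t) 0]
    · nlinarith [le_max_right (c i - t) 0]
  -- step 2: budget bound on ∑ u
  have hsum2 : ∑ i ∈ S, u i ≤ min Γ (m : ℝ) := by
    refine le_min hsum ?_
    calc ∑ i ∈ S, u i ≤ ∑ _i ∈ S, (1:ℝ) := Finset.sum_le_sum fun i _ => (hu i).2
    _ = (m : ℝ) := by simp [hm]
  -- step 3: the positive-part sum
  have step3 : ∑ i ∈ S, max (c i - t) 0 ≤ (∑ j ∈ Finset.range K, l.getD j 0) - K * t := by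
    rw [sum_g_sorted S c (fun x => max (x - t) 0), ← hl, hlen]
    have hsplit : Finset.range m = Finset.range K ∪ Finset.Ico K m := by
      rw [Finset.range_eq_Ico, ← Finset.Ico_union_Ico_eq_Ico (Nat.zero_le K) hKm,
        ← Finset.range_eq_Ico]
    rw [hsplit, Finset.sum_union (by simp only [Finset.disjoint_left, Finset.mem_range, Finset.mem_Ico]; omega)]
    have h1 : ∑ j ∈ Finset.range K, max (l.getD j 0 - t) 0
        = (∑ j ∈ Finset.range K, l.getD j 0) - K * t := by
      rw [Finset.sum_congr rfl (fun j hj => by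
        rw [max_eq_left (by have := hge j (Finset.mem_range.1 hj); linarith)])]
      rw [Finset.sum_sub_distrib]
      simp [mul_comm]
    have h2 : ∑ j ∈ Finset.Ico K m, max (l.getD j 0 - t) 0 = 0 := by
      refine Finset.sum_eq_zero fun j hj => ?_
      obtain ⟨hj1, hj2⟩ := Finset.mem_Ico.1 hj
      rw [max_eq_right (by have := hle j hj1 (by omega); linarith)]
    rw [h1, h2]; linarith
  -- step 4: rewrite the target
  have hsum_kth : ∑ k ∈ Finset.Icc 1 K, kthLargest S c k = ∑ j ∈ Finset.range K, l.getD j 0 := by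
    rw [sum_Icc_one]
    exact Finset.sum_congr rfl fun j _ => by simp [kthLargest, ← hl]
  have hkth1 : kthLargest S c (K + 1) = t := by simp [kthLargest, ← hl, ht]
  have hKcast : (K : ℝ) = min ((⌊Γ⌋₊ : ℕ) : ℝ) ((m : ℕ) : ℝ) := by
    have h1 : ((min m ⌊Γ⌋₊ : ℕ) : ℝ) = min ((m:ℕ):ℝ) ((⌊Γ⌋₊:ℕ):ℝ) := Nat.cast_min m ⌊Γ⌋₊
    rw [hK, h1, min_comm]
  rw [hsum_kth, hkth1, ← hKcast]
  have := mul_le_mul_of_nonneg_left hsum2 ht0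
  linarith

lemma M2_nonneg_bound {n : ℕ} (x : Fin n → Bool) (d : Fin n → ℝ) (h : ∀ i, 0 ≤ d i)
    (B : ℝ) (hB : ∑ i, d i ≤ B) : M2 x d ≤ B := by
  unfold M2
  have key : ∀ p : Fin n → Prop, ∀ _ : DecidablePred p,
      ∑ i ∈ Finset.univ.filter p, d i ≤ B := by
    intro p hp
    refine le_trans (Finset.sum_le_sum_of_subset_of_nonneg (Finset.filter_subset _ _)
      (fun i _ _ => h i)) hB
  exact max_le (key _ _) (key _ _)

lemma main_aux {n : ℕ} (hn : 2 ≤ n) (d0 : Fin n → ℝ) (hd0 : ∀ i, 0 < d0 i)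
    (α Γ : ℝ) (hα : 0 < α) (hΓ0 : 0 ≤ Γ) (hΓn : Γ ≤ (n : ℝ))
    (xt : Fin n → Bool) (hxt : ∀ x : Fin n → Bool, M2 xt d0 ≤ M2 x d0)
    (I Ibar : Finset (Fin n))
    (hI : I = Finset.univ.filter (fun i => xt i = true))
    (hIbar : Ibar = Finset.univ.filter (fun i => xt i = false))
    (hIne : I.Nonempty) (hIbarne : Ibar.Nonempty)
    (WI WIb : ℝ) (hWI0 : 0 ≤ WI) (hWIb0 : 0 ≤ WIb)
    (hWIa : ∀ u : Fin n → ℝ, (∀ i, u i ∈ Set.Icc (0:ℝ) 1) → (∑ i, u i) ≤ Γ →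
      ∑ i ∈ I, d0 i * u i ≤ WI)
    (hWIba : ∀ u : Fin n → ℝ, (∀ i, u i ∈ Set.Icc (0:ℝ) 1) → (∑ i, u i) ≤ Γ →
      ∑ i ∈ Ibar, d0 i * u i ≤ WIb) :
    SA (budgetU d0 α Γ) ≤
      ((n : ℝ) / ((n : ℝ) + Γ * α)) *
        (1 + α * max (WI / ∑ i ∈ I, d0 i) (WIb / ∑ i ∈ Ibar, d0 i)) *
        PH (budgetU d0 α Γ) := by
  have hnpos : (0:ℝ) < n := by exact_mod_cast (by omega : 0 < n)
  have hDI : 0 < ∑ i ∈ I, d0 i := Finset.sum_pos (fun i _ => hd0 i) hIne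
  have hDIb : 0 < ∑ i ∈ Ibar, d0 i := Finset.sum_pos (fun i _ => hd0 i) hIbarne
  set R := max (WI / ∑ i ∈ I, d0 i) (WIb / ∑ i ∈ Ibar, d0 i) with hR
  have hR0 : 0 ≤ R := le_trans (div_nonneg hWI0 hDI.le) (le_max_left _ _)
  set L := M2 xt d0 with hLdef
  have hL : L = max (∑ i ∈ I, d0 i) (∑ i ∈ Ibar, d0 i) := by
    rw [hLdef]; unfold M2; rw [hI, hIbar]
  have hL0 : 0 ≤ L := by rw [hL]; exact le_trans hDI.le (le_max_left _ _)
  -- upper bound for the static allocation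
  have hB1 : ∀ d ∈ budgetU d0 α Γ, M2 xt d ≤ L * (1 + α * R) := by
    rintro d ⟨u, hu, hd, husum⟩
    have hfilt : ∀ (S : Finset (Fin n)) (W : ℝ), (∑ i ∈ S, d0 i) ≤ L →
        (∑ i ∈ S, d0 i * u i ≤ W) → W / (∑ i ∈ S, d0 i) ≤ R → 0 < ∑ i ∈ S, d0 i →
        ∑ i ∈ S, d i ≤ L * (1 + α * R) := by
      intro S W hSL hSW hWR hSpos
      have h1 : ∑ i ∈ S, d i = (∑ i ∈ S, d0 i) + α * ∑ i ∈ S, d0 i * u i := by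
        rw [Finset.mul_sum, ← Finset.sum_add_distrib]
        exact Finset.sum_congr rfl fun i _ => by rw [hd i]; ring
      have h2 : W ≤ R * (∑ i ∈ S, d0 i) := (div_le_iff₀ hSpos).1 hWR
      have h4 : R * (∑ i ∈ S, d0 i) ≤ R * L := mul_le_mul_of_nonneg_left hSL hR0
      rw [h1]; nlinarith [hα.le]
    unfold M2
    rw [← hI, ← hIbar]
    apply max_le
    · exact hfilt I WI (hL ▸ le_max_left _ _) (hWIa u hu husum) (le_max_left _ _) hDI
    · exact hfilt Ibar WIb (hL ▸ le_max_right _ _) (hWIba u hu husum) (le_max_right _ _) hDIb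
  have hUne : d0 ∈ budgetU d0 α Γ :=
    ⟨fun _ => 0, fun i => ⟨le_refl 0, zero_le_one⟩, fun i => by simp, by simpa using hΓ0⟩
  have hSA : SA (budgetU d0 α Γ) ≤ L * (1 + α * R) := by
    refine le_trans (ciInf_le (Set.Finite.bddBelow (Set.finite_range _)) xt) ?_
    exact csSup_le ⟨M2 xt d0, ⟨d0, hUne, rfl⟩⟩ (by rintro y ⟨d, hdU, rfl⟩; exact hB1 d hdU)
  -- lower bound for perfect hindsight
  have hBdd : BddAbove ((fun d => ⨅ x : Fin n → Bool, M2 x d) '' budgetU d0 α Γ) := by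
    refine ⟨∑ i, d0 i * (1 + α), ?_⟩
    rintro y ⟨d, hdU, rfl⟩
    refine le_trans (ciInf_le (Set.Finite.bddBelow (Set.finite_range _)) xt) ?_
    obtain ⟨u, hu, hd, -⟩ := hdU
    refine M2_nonneg_bound _ _ (fun i => ?_) _ (Finset.sum_le_sum fun i _ => ?_)
    · rw [hd i]
      have h1 : 0 ≤ α * u i := mul_nonneg hα.le (hu i).1
      nlinarith [hd0 i]
    · rw [hd i]
      have h1 : 0 ≤ d0 i * α * (1 - u i) :=
        mul_nonneg (mul_nonneg (hd0 i).le hα.le) (by linarith [(hu i).2])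
      nlinarith
  have hdstar : (fun i => d0 i * (1 + α * (Γ / n))) ∈ budgetU d0 α Γ := by
    refine ⟨fun _ => Γ / n, fun i => ⟨by positivity, ?_⟩, fun i => rfl, ?_⟩
    · rw [div_le_one hnpos]; exact hΓn
    · rw [Finset.sum_const, Finset.card_univ, Fintype.card_fin, nsmul_eq_mul,
        mul_div_cancel₀ _ (ne_of_gt hnpos)]
  have hc : (0:ℝ) ≤ 1 + α * (Γ / n) := by positivity
  have hPH : (1 + α * (Γ / n)) * L ≤ PH (budgetU d0 α Γ) := by
    refine le_trans ?_ (le_csSup hBdd ⟨_, hdstar, rfl⟩)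
    refine le_ciInf fun x => ?_
    have hMx : M2 x (fun i => d0 i * (1 + α * (Γ / n))) = (1 + α * (Γ / n)) * M2 x d0 := by
      unfold M2
      rw [mul_max_of_nonneg _ _ hc]
      congr 1 <;> rw [Finset.mul_sum] <;> exact Finset.sum_congr rfl fun i _ => by ring
    rw [hMx]
    exact mul_le_mul_of_nonneg_left (hxt x) hc
  have hden : (0:ℝ) < (n:ℝ) + Γ * α := by nlinarith [mul_nonneg hΓ0 hα.le]
  have hcoeff : 0 ≤ ((n:ℝ) / ((n:ℝ) + Γ * α)) * (1 + α * R) := by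
    apply mul_nonneg (div_nonneg hnpos.le hden.le)
    nlinarith [mul_nonneg hα.le hR0]
  calc SA (budgetU d0 α Γ) ≤ L * (1 + α * R) := hSA
    _ = ((n:ℝ) / ((n:ℝ) + Γ * α)) * (1 + α * R) * ((1 + α * (Γ / n)) * L) := by
        field_simp
    _ ≤ ((n:ℝ) / ((n:ℝ) + Γ * α)) * (1 + α * R) * PH (budgetU d0 α Γ) :=
        mul_le_mul_of_nonneg_left hPH hcoeff

/-- bound on the ratio between the static-allocation worst-case makespan
and the perfect-hindsight worst-case makespan under budgeted uncertainty. -/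
theorem SA_to_PH_bound
    (n : ℕ) (hn : 2 ≤ n) (d0 : Fin n → ℝ) (hd0 : ∀ i, 0 < d0 i)
    (α Γ : ℝ) (hα : 0 < α) (hΓ0 : 0 ≤ Γ) (hΓn : Γ ≤ (n : ℝ))
    (xt : Fin n → Bool) (hxt : ∀ x : Fin n → Bool, M2 xt d0 ≤ M2 x d0)
    (I Ibar : Finset (Fin n))
    (hI : I = Finset.univ.filter (fun i => xt i = true))
    (hIbar : Ibar = Finset.univ.filter (fun i => xt i = false))
    (hIne : I.Nonempty) (hIbarne : Ibar.Nonempty) :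
    SA (budgetU d0 α Γ) ≤
      ((n : ℝ) / ((n : ℝ) + Γ * α)) *
        (1 + α * max
          (((∑ k ∈ Finset.Icc 1 (min I.card ⌊Γ⌋₊), kthLargest I d0 k) +
              (min Γ (I.card : ℝ) - min (⌊Γ⌋₊ : ℝ) (I.card : ℝ)) *
                kthLargest I d0 (min I.card ⌊Γ⌋₊ + 1)) / (∑ i ∈ I, d0 i))
          (((∑ k ∈ Finset.Icc 1 (min Ibar.card ⌊Γ⌋₊), kthLargest Ibar d0 k) +
              (min Γ (Ibar.card : ℝ) - min (⌊Γ⌋₊ : ℝ) (Ibar.card : ℝ)) *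
                kthLargest Ibar d0 (min Ibar.card ⌊Γ⌋₊ + 1)) / (∑ i ∈ Ibar, d0 i))) *
        PH (budgetU d0 α Γ) := by
  refine main_aux hn d0 hd0 α Γ hα hΓ0 hΓn xt hxt I Ibar hI hIbar hIne hIbarne _ _ ?_ ?_ ?_ ?_
  · simpa using budget_bound I d0 hd0 Γ hΓ0 (fun _ => 0)
      (fun i => ⟨le_refl 0, zero_le_one⟩) (by simpa using hΓ0)
  · simpa using budget_bound Ibar d0 hd0 Γ hΓ0 (fun _ => 0)
      (fun i => ⟨le_refl 0, zero_le_one⟩) (by simpa using hΓ0)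
  · intro u hu husum
    exact budget_bound I d0 hd0 Γ hΓ0 u hu (le_trans (Finset.sum_le_sum_of_subset_of_nonneg
      (Finset.subset_univ I) (fun i _ _ => (hu i).1)) husum)
  · intro u hu husum
    exact budget_bound Ibar d0 hd0 Γ hΓ0 u hu (le_trans (Finset.sum_le_sum_of_subset_of_nonneg
      (Finset.subset_univ Ibar) (fun i _ _ => (hu i).1)) husum)
end

section
/- Let n ≥ 1, α > 0, 0 ≤ Γ ≤ n, and suppose 0 < a̲ ≤ d⁰_i ≤ ā for every i ∈ {1,…,n}. Let U = U(d⁰, α, Γ) be the budgeted uncertainty set. Then max_{1 ≤ j ≤ n} sup_{d ∈ U} ( (∑_{i=1}^n d_i)/2 + d_j/2 ) ≤ ( 1 + ā · min(1 + α, 1 + αΓ) / ( a̲ · (n + αΓ) ) ) · PH(U). -/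
open Finset

/-- bound on any rolling-horizon policy relative to perfect hindsight
under budgeted uncertainty. -/
theorem RH_to_PH_bound
    (n : ℕ) (hn : 1 ≤ n) (d0 : Fin n → ℝ)
    (la ua : ℝ) (hla : 0 < la) (hbounds : ∀ i, la ≤ d0 i ∧ d0 i ≤ ua)
    (α Γ : ℝ) (hα : 0 < α) (hΓ0 : 0 ≤ Γ) (hΓn : Γ ≤ (n : ℝ)) :
    (⨆ j : Fin n, sSup ((fun d => (∑ i, d i) / 2 + d j / 2) '' budgetU d0 α Γ)) ≤
      (1 + ua * min (1 + α) (1 + α * Γ) / (la * ((n : ℝ) + α * Γ))) *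
        PH (budgetU d0 α Γ) := by
  have hnR : (1:ℝ) ≤ (n:ℝ) := by exact_mod_cast hn
  have hnpos : (0:ℝ) < n := lt_of_lt_of_le one_pos hnR
  have hFin : Nonempty (Fin n) := ⟨⟨0, hn⟩⟩
  have hua : 0 < ua := lt_of_lt_of_le hla
    (le_trans (hbounds ⟨0, hn⟩).1 (hbounds ⟨0, hn⟩).2)
  set c : ℝ := ua * min (1 + α) (1 + α * Γ) with hc
  have hmin1 : (1:ℝ) ≤ min (1 + α) (1 + α * Γ) :=
    le_min (by linarith) (by nlinarith)
  have hcpos : 0 < c := mul_pos hua (lt_of_lt_of_le one_pos hmin1)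
  set L : ℝ := la * ((n : ℝ) + α * Γ) with hLdef
  have hLpos : 0 < L := mul_pos hla (by nlinarith)
  -- basic facts about members of the uncertainty set
  have hmem : ∀ d ∈ budgetU d0 α Γ, (∀ i, 0 ≤ d i) ∧ (∀ i, d i ≤ c) := by
    rintro d ⟨u, hu, hdu, hsum⟩
    refine ⟨fun i => ?_, fun i => ?_⟩
    · have h1 : 0 < d0 i := lt_of_lt_of_le hla (hbounds i).1
      rw [hdu i]
      have h2 : (0:ℝ) ≤ 1 + α * u i := by nlinarith [(hu i).1]
      exact mul_nonneg h1.le h2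
    · rw [hdu i]
      have h1 : u i ≤ 1 := (hu i).2
      have h2 : u i ≤ Γ :=
        le_trans (Finset.single_le_sum (fun j _ => (hu j).1) (Finset.mem_univ i)) hsum
      have h3 : 1 + α * u i ≤ min (1 + α) (1 + α * Γ) := by
        refine le_min ?_ ?_ <;> nlinarith [(hu i).1]
      have h0 : 0 ≤ 1 + α * u i := by nlinarith [(hu i).1]
      exact mul_le_mul (hbounds i).2 h3 h0 (le_of_lt hua)
  have hsumle : ∀ d ∈ budgetU d0 α Γ, ∑ i, d i ≤ (n : ℝ) * c := by
    intro d hd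
    calc ∑ i, d i ≤ ∑ _i : Fin n, c := Finset.sum_le_sum (fun i _ => (hmem d hd).2 i)
    _ = (n : ℝ) * c := by simp [Finset.sum_const, Finset.card_univ, mul_comm]
  have hM2le : ∀ (x : Fin n → Bool), ∀ d ∈ budgetU d0 α Γ, M2 x d ≤ (n : ℝ) * c := by
    intro x d hd
    have hb : ∀ s : Finset (Fin n), ∑ i ∈ s, d i ≤ (n : ℝ) * c := by
      intro s
      have h1 : ∑ i ∈ s, d i ≤ ∑ i, d i :=
        Finset.sum_le_sum_of_subset_of_nonneg (Finset.subset_univ s)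
          (fun i _ _ => (hmem d hd).1 i)
      exact le_trans h1 (hsumle d hd)
    exact max_le (hb _) (hb _)
  -- average lower bound on the two-machine makespan
  have havg : ∀ (x : Fin n → Bool) (d : Fin n → ℝ), (∑ i, d i) / 2 ≤ M2 x d := by
    intro x d
    have hfe : Finset.univ.filter (fun i => x i = false)
        = Finset.univ.filter (fun i => ¬ x i = true) := by
      ext i; simp
    have hsplit : (∑ i ∈ Finset.univ.filter (fun i => x i = true), d i)
        + (∑ i ∈ Finset.univ.filter (fun i => x i = false), d i) = ∑ i, d i := by
      rw [hfe]
      exact Finset.sum_filter_add_sum_filter_not Finset.univ (fun i => x i = true) d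
    have h1 := le_max_left (∑ i ∈ Finset.univ.filter (fun i => x i = true), d i)
      (∑ i ∈ Finset.univ.filter (fun i => x i = false), d i)
    have h2 := le_max_right (∑ i ∈ Finset.univ.filter (fun i => x i = true), d i)
      (∑ i ∈ Finset.univ.filter (fun i => x i = false), d i)
    unfold M2
    linarith
  have hinf : ∀ d : Fin n → ℝ, (∑ i, d i) / 2 ≤ ⨅ x : Fin n → Bool, M2 x d :=
    fun d => le_ciInf (fun x => havg x d)
  -- PH's defining set is bounded above
  have hSbdd : BddAbove ((fun d => ⨅ x : Fin n → Bool, M2 x d) '' budgetU d0 α Γ) := by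
    refine ⟨(n : ℝ) * c, ?_⟩
    rintro _ ⟨d, hd, rfl⟩
    exact le_trans (ciInf_le (Set.finite_range _).bddBelow (fun _ => true))
      (hM2le _ d hd)
  -- the uniform worst-case scenario
  set dstar : Fin n → ℝ := fun i => d0 i * (1 + α * (Γ / n)) with hdstarDef
  have hΓn0 : 0 ≤ Γ / n := div_nonneg hΓ0 hnpos.le
  have hΓn1 : Γ / n ≤ 1 := (div_le_one hnpos).mpr hΓn
  have hdstar : dstar ∈ budgetU d0 α Γ := by
    refine ⟨fun _ => Γ / n, fun i => ⟨hΓn0, hΓn1⟩, fun i => rfl, ?_⟩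
    have : ∑ _i : Fin n, (Γ / n) = (n : ℝ) * (Γ / n) := by
      simp [Finset.sum_const, Finset.card_univ, mul_comm]
    rw [this, mul_div_cancel₀ Γ (ne_of_gt hnpos)]
  have hsumstar : L ≤ ∑ i, dstar i := by
    have h1 : (n : ℝ) * la ≤ ∑ i, d0 i := by
      have e : ∑ _i : Fin n, la = (n : ℝ) * la := by
        simp [Finset.sum_const, Finset.card_univ, nsmul_eq_mul]
      rw [← e]
      exact Finset.sum_le_sum (fun i _ => (hbounds i).1)
    have h2 : ∑ i, dstar i = (∑ i, d0 i) * (1 + α * (Γ / n)) := by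
      rw [Finset.sum_mul]
    have h3 : (0:ℝ) < 1 + α * (Γ / n) := by nlinarith
    have h4 : (n : ℝ) * (Γ / n) = Γ := mul_div_cancel₀ Γ (ne_of_gt hnpos)
    have h5 : L = (n : ℝ) * la * (1 + α * (Γ / n)) := by
      rw [hLdef]
      field_simp
    rw [h2, h5]
    nlinarith
  have hPHge : L / 2 ≤ PH (budgetU d0 α Γ) := by
    have h1 : L / 2 ≤ ⨅ x : Fin n → Bool, M2 x dstar :=
      le_trans (by linarith [hsumstar]) (hinf dstar)
    exact le_trans h1 (le_csSup hSbdd ⟨dstar, hdstar, rfl⟩)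
  have hPHpos : 0 < PH (budgetU d0 α Γ) := lt_of_lt_of_le (by positivity) hPHge
  -- main bound
  refine ciSup_le (fun j => ?_)
  refine csSup_le ⟨_, ⟨dstar, hdstar, rfl⟩⟩ ?_
  rintro _ ⟨d, hd, rfl⟩
  have h1 : (∑ i, d i) / 2 ≤ PH (budgetU d0 α Γ) :=
    le_trans (hinf d) (le_csSup hSbdd ⟨d, hd, rfl⟩)
  have h2 : d j ≤ c := (hmem d hd).2 j
  have h3 : (c / L) * (L / 2) ≤ (c / L) * PH (budgetU d0 α Γ) :=
    mul_le_mul_of_nonneg_left hPHge (div_nonneg hcpos.le hLpos.le)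
  have h4 : (c / L) * (L / 2) = c / 2 := by
    field_simp
  have h5 : (1 + c / L) * PH (budgetU d0 α Γ)
      = PH (budgetU d0 α Γ) + (c / L) * PH (budgetU d0 α Γ) := by ring
  linarith
end

section
/- Let n ≥ 1, let d⁰ ∈ ℝ^n satisfy d⁰_i ≥ 0 for all i, let α > 0 and Γ ≥ 0, and let U = U(d⁰, α, Γ) be the budgeted uncertainty set. For any subset S ⊆ {1,…,n}, set K = min(|S|, ⌊Γ⌋) and Δ = min(Γ, |S|) − min(⌊Γ⌋, |S|). Then the supremum of ∑_{i ∈ S} d_i over d ∈ U is attained and equals ∑_{i ∈ S} d⁰_i + α · ( ∑_{k=1}^{K} (d⁰)^S_{(k)} + Δ · (d⁰)^S_{(K+1)} ). -/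
/-!
Substituting `d i = d⁰ i * (1 + α * u i)` reduces the claim to maximising `∑_{i ∈ S} d⁰ i * u i`
over `u ∈ [0,1]ⁿ` with `∑ u ≤ Γ`. Write `c₁ ≥ c₂ ≥ ⋯` for the sorted values of `d⁰` on `S` and
`t = c_{K+1}`. The greedy choice (`u = 1` on the `K` largest values, `u = Δ` on the next one) spends
`K + Δ = min Γ |S|` and attains `∑_{k ≤ K} c_k + Δ t`. Conversely `x u ≤ (x - t)⁺ + t u` for
`u ∈ [0,1]`; summed over `S`, the positive parts add up to `∑_{k ≤ K} (c_k - t)` and the second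
terms to at most `t (K + Δ)`.
-/

open Finset

namespace Finset

variable {ι β : Type*} [LinearOrder β]

noncomputable def sortByDesc (S : Finset ι) (c : ι → β) : List ι :=
  S.toList.mergeSort fun a b => decide (c b ≤ c a)

variable (S : Finset ι) (c : ι → β)

lemma sortByDesc_perm : (S.sortByDesc c).Perm S.toList := List.mergeSort_perm _ _

lemma nodup_sortByDesc : (S.sortByDesc c).Nodup :=
  (sortByDesc_perm S c).nodup_iff.2 S.nodup_toList

lemma mem_sortByDesc {i : ι} : i ∈ S.sortByDesc c ↔ i ∈ S := by
  rw [(sortByDesc_perm S c).mem_iff, mem_toList]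

lemma length_sortByDesc : (S.sortByDesc c).length = #S := by
  rw [(sortByDesc_perm S c).length_eq, length_toList]

lemma map_sortByDesc : (S.sortByDesc c).map c = (S.val.map c).sort (· ≥ ·) := by
  rw [sortByDesc, List.map_mergeSort (s := fun x y => decide (x ≥ y)) fun _ _ _ _ => rfl,
    ← Multiset.coe_sort, ← Multiset.map_coe, coe_toList]

lemma sum_map_sortByDesc {M : Type*} [AddCommMonoid M] (g : ι → M) :
    ((S.sortByDesc c).map g).sum = ∑ i ∈ S, g i := by
  rw [((sortByDesc_perm S c).map g).sum_eq, sum_map_toList]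

lemma sum_idxOf_sortByDesc [DecidableEq ι] {M : Type*} [AddCommMonoid M] (F : ι → ℕ → M) :
    ∑ i ∈ S, F i ((S.sortByDesc c).idxOf i) =
      ∑ k : Fin (S.sortByDesc c).length, F (S.sortByDesc c)[(k : ℕ)] k := by
  rw [← sum_map_sortByDesc S c, ← Fin.sum_univ_fun_getElem]
  exact sum_congr rfl fun k _ => by rw [(nodup_sortByDesc S c).idxOf_getElem]

end Finset

section kthLargest

variable {n : ℕ} (S : Finset (Fin n)) (c : Fin n → ℝ)

lemma kthLargest_succ_of_lt {k : ℕ} (hk : k < (S.sortByDesc c).length) :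
    kthLargest S c (k + 1) = c (S.sortByDesc c)[k] := by
  simp [kthLargest, ← map_sortByDesc, hk]

lemma kthLargest_nonneg (hc : ∀ i ∈ S, 0 ≤ c i) (k : ℕ) : 0 ≤ kthLargest S c k := by
  rw [kthLargest, ← map_sortByDesc]
  rcases lt_or_ge (k - 1) (S.sortByDesc c).length with hk | hk
  · simpa [hk] using hc _ ((mem_sortByDesc S c).1 (List.getElem_mem hk))
  · simp [hk]

lemma antitone_kthLargest (hc : ∀ i ∈ S, 0 ≤ c i) : Antitone (kthLargest S c) := by
  intro a b hab
  have hsorted := Multiset.pairwise_sort (S.val.map c) (· ≥ ·)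
  rcases lt_or_ge (b - 1) ((S.val.map c).sort (· ≥ ·)).length with hb | hb
  · simp only [kthLargest, List.getD_eq_getElem?_getD, List.getElem?_eq_getElem hb,
      List.getElem?_eq_getElem (lt_of_le_of_lt (Nat.sub_le_sub_right hab 1) hb), Option.getD_some]
    exact hsorted.rel_get_of_le (a := ⟨a - 1, _⟩) (b := ⟨b - 1, hb⟩) (Nat.sub_le_sub_right hab 1)
  · rw [kthLargest, List.getD_eq_default _ _ hb]
    exact kthLargest_nonneg S c hc a

lemma sum_comp_eq_sum_range_kthLargest {M : Type*} [AddCommMonoid M] (f : ℝ → M) :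
    ∑ i ∈ S, f (c i) = ∑ k ∈ range #S, f (kthLargest S c (k + 1)) := by
  rw [← sum_map_sortByDesc S c fun i => f (c i), ← Fin.sum_univ_fun_getElem, sum_range,
    ← length_sortByDesc S c]
  exact sum_congr rfl fun k _ => by rw [kthLargest_succ_of_lt S c k.isLt]

end kthLargest

lemma sum_range_max_sub_zero {c : ℕ → ℝ} (hc : Antitone c) {K m : ℕ} (hKm : K ≤ m) :
    ∑ k ∈ range m, max (c k - c K) 0 = ∑ k ∈ range K, (c k - c K) := by
  rw [← sum_range_add_sum_Ico _ hKm, sum_eq_zero (s := Ico K m), add_zero]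
  · exact sum_congr rfl fun k hk => max_eq_left <| sub_nonneg.2 <| hc (mem_range.1 hk).le
  · exact fun k hk => max_eq_right <| sub_nonpos.2 <| hc (mem_Ico.1 hk).1

lemma mul_le_max_sub_zero_add_mul {x t u : ℝ} (hu : u ∈ Set.Icc (0 : ℝ) 1) :
    x * u ≤ max (x - t) 0 + t * u := by
  obtain ⟨hu0, hu1⟩ := hu
  rcases le_total x t with h | h
  · nlinarith [le_max_right (x - t) 0]
  · nlinarith [le_max_left (x - t) 0]

def fillWeight (K : ℕ) (Δ : ℝ) (k : ℕ) : ℝ :=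
  if k < K then 1 else if k = K then Δ else 0

lemma fillWeight_mem_Icc {K : ℕ} {Δ : ℝ} (hΔ : Δ ∈ Set.Icc (0 : ℝ) 1) (k : ℕ) :
    fillWeight K Δ k ∈ Set.Icc (0 : ℝ) 1 := by
  unfold fillWeight
  split_ifs
  exacts [⟨zero_le_one, le_rfl⟩, hΔ, ⟨le_rfl, zero_le_one⟩]

lemma sum_range_mul_fillWeight (f : ℕ → ℝ) {K m : ℕ} {Δ : ℝ} (hKm : K ≤ m)
    (hΔ : K = m → Δ = 0) :
    ∑ k ∈ range m, f k * fillWeight K Δ k = ∑ k ∈ range K, f k + Δ * f K := by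
  have hfull : ∑ k ∈ range K, f k * fillWeight K Δ k = ∑ k ∈ range K, f k :=
    sum_congr rfl fun k hk => by simp [fillWeight, mem_range.1 hk]
  rcases hKm.lt_or_eq with hlt | rfl
  · rw [← sum_range_add_sum_Ico _ hlt, sum_range_succ, hfull,
      sum_eq_zero (s := Ico (K + 1) m) fun k hk => ?_]
    · simp [fillWeight, mul_comm]
    · have hKk : K < k := (mem_Ico.1 hk).1
      simp [fillWeight, hKk.ne', hKk.not_gt]
  · rw [hfull, hΔ rfl, zero_mul, add_zero]

section Budget

variable {n : ℕ} (S : Finset (Fin n)) (c : Fin n → ℝ) {K : ℕ} {Δ : ℝ}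

lemma sum_mul_le_sum_kthLargest (hc : ∀ i ∈ S, 0 ≤ c i) {u : Fin n → ℝ}
    (hu : ∀ i ∈ S, u i ∈ Set.Icc (0 : ℝ) 1) (hKS : K ≤ #S) (hsum : ∑ i ∈ S, u i ≤ K + Δ) :
    ∑ i ∈ S, c i * u i ≤
      ∑ k ∈ range K, kthLargest S c (k + 1) + Δ * kthLargest S c (K + 1) := by
  set t := kthLargest S c (K + 1)
  have hexcess : ∑ i ∈ S, max (c i - t) 0 = ∑ k ∈ range K, (kthLargest S c (k + 1) - t) := by
    rw [sum_comp_eq_sum_range_kthLargest S c fun x => max (x - t) 0]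
    exact sum_range_max_sub_zero
      ((antitone_kthLargest S c hc).comp_monotone fun _ _ h => Nat.succ_le_succ h) hKS
  calc ∑ i ∈ S, c i * u i ≤ ∑ i ∈ S, (max (c i - t) 0 + t * u i) :=
        sum_le_sum fun i hi => mul_le_max_sub_zero_add_mul (hu i hi)
    _ = ∑ k ∈ range K, (kthLargest S c (k + 1) - t) + t * ∑ i ∈ S, u i := by
        rw [sum_add_distrib, hexcess, mul_sum]
    _ ≤ ∑ k ∈ range K, (kthLargest S c (k + 1) - t) + t * (K + Δ) := by
        gcongr
        exact kthLargest_nonneg S c hc _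
    _ = ∑ k ∈ range K, kthLargest S c (k + 1) + Δ * t := by
        rw [sum_sub_distrib, sum_const, card_range, nsmul_eq_mul]
        ring

lemma exists_sum_mul_eq_sum_kthLargest (hKS : K ≤ #S) (hΔ : Δ ∈ Set.Icc (0 : ℝ) 1)
    (hKΔ : K = #S → Δ = 0) :
    ∃ u : Fin n → ℝ, (∀ i, u i ∈ Set.Icc (0 : ℝ) 1) ∧ ∑ i, u i = K + Δ ∧
      ∑ i ∈ S, c i * u i =
        ∑ k ∈ range K, kthLargest S c (k + 1) + Δ * kthLargest S c (K + 1) := by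
  set l := S.sortByDesc c
  let u : Fin n → ℝ := fun i => if i ∈ S then fillWeight K Δ (l.idxOf i) else 0
  have hu : ∀ i ∈ S, u i = fillWeight K Δ (l.idxOf i) := fun i hi => if_pos hi
  refine ⟨u, fun i => ?_, ?_, ?_⟩
  · by_cases hi : i ∈ S
    · exact hu i hi ▸ fillWeight_mem_Icc hΔ _
    · simp [u, hi]
  · rw [← sum_subset (subset_univ S) fun i _ hi => if_neg hi, sum_congr rfl hu,
      sum_idxOf_sortByDesc S c fun _ k => fillWeight K Δ k,
      Fin.sum_univ_eq_sum_range (fillWeight K Δ), length_sortByDesc]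
    simpa using sum_range_mul_fillWeight (fun _ => 1) hKS hKΔ
  · rw [sum_congr rfl fun i hi => by rw [hu i hi],
      sum_idxOf_sortByDesc S c fun i k => c i * fillWeight K Δ k,
      ← sum_range_mul_fillWeight _ hKS hKΔ, ← length_sortByDesc S c,
      ← Fin.sum_univ_eq_sum_range fun k => kthLargest S c (k + 1) * fillWeight K Δ k]
    exact sum_congr rfl fun k _ => by rw [kthLargest_succ_of_lt S c k.isLt]

end Budget

lemma sum_Icc_one_eq_sum_range_succ {M : Type*} [AddCommMonoid M] (f : ℕ → M) (K : ℕ) :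
    ∑ k ∈ Icc 1 K, f k = ∑ k ∈ range K, f (k + 1) := by
  rw [← Ico_add_one_right_eq_Icc, sum_Ico_eq_sum_range, add_tsub_cancel_right]
  simp only [add_comm 1]

section FloorSplit

variable {Γ : ℝ} (m : ℕ)

lemma cast_min_floor_add_sub :
    ((min m ⌊Γ⌋₊ : ℕ) : ℝ) + (min Γ m - min (⌊Γ⌋₊ : ℝ) m) = min Γ m := by
  push_cast
  rw [min_comm]
  ring

lemma min_sub_min_floor_mem_Icc (hΓ : 0 ≤ Γ) :
    min Γ m - min (⌊Γ⌋₊ : ℝ) m ∈ Set.Icc (0 : ℝ) 1 := by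
  refine ⟨sub_nonneg.2 (min_le_min_right _ (Nat.floor_le hΓ)), sub_le_iff_le_add'.2 ?_⟩
  calc min Γ m ≤ min ((⌊Γ⌋₊ : ℝ) + 1) (m + 1) :=
        min_le_min (Nat.lt_floor_add_one Γ).le (le_add_of_nonneg_right zero_le_one)
    _ = min (⌊Γ⌋₊ : ℝ) m + 1 := min_add_add_right _ _ _

lemma min_sub_min_floor_eq_zero (hΓ : 0 ≤ Γ) (h : min m ⌊Γ⌋₊ = m) :
    min Γ m - min (⌊Γ⌋₊ : ℝ) m = 0 := by
  have hm : m ≤ ⌊Γ⌋₊ := min_eq_left_iff.1 h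
  rw [min_eq_right ((Nat.le_floor_iff hΓ).1 hm), min_eq_right (by exact_mod_cast hm), sub_self]

end FloorSplit

theorem budget_subset_sum_sup_general
    (n : ℕ) (d0 : Fin n → ℝ) (hd0 : ∀ i, 0 ≤ d0 i)
    (α Γ : ℝ) (hα : 0 < α) (hΓ : 0 ≤ Γ) (S : Finset (Fin n)) :
    IsGreatest ((fun d => ∑ i ∈ S, d i) '' budgetU d0 α Γ)
      ((∑ i ∈ S, d0 i) + α *
        ((∑ k ∈ Finset.Icc 1 (min S.card ⌊Γ⌋₊), kthLargest S d0 k) +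
          (min Γ (S.card : ℝ) - min (⌊Γ⌋₊ : ℝ) (S.card : ℝ)) *
            kthLargest S d0 (min S.card ⌊Γ⌋₊ + 1))) := by
  have hKS : min #S ⌊Γ⌋₊ ≤ #S := min_le_left _ _
  have hsplit := cast_min_floor_add_sub (Γ := Γ) #S
  have hsum (u : Fin n → ℝ) :
      ∑ i ∈ S, d0 i * (1 + α * u i) = ∑ i ∈ S, d0 i + α * ∑ i ∈ S, d0 i * u i := by
    simp only [mul_add, mul_one, sum_add_distrib, mul_sum, mul_left_comm α]
  rw [sum_Icc_one_eq_sum_range_succ]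
  constructor
  · obtain ⟨u, hu, hu_sum, hval⟩ := exists_sum_mul_eq_sum_kthLargest S d0 hKS
      (min_sub_min_floor_mem_Icc _ hΓ) (min_sub_min_floor_eq_zero _ hΓ)
    refine ⟨_, ⟨u, hu, fun i => rfl, ?_⟩, ?_⟩
    · rw [hu_sum, hsplit]
      exact min_le_left _ _
    · rw [← hval, ← hsum]
  · rintro _ ⟨d, ⟨u, hu, hd, hu_sum⟩, rfl⟩
    have hSu : ∑ i ∈ S, u i ≤ min #S ⌊Γ⌋₊ + (min Γ #S - min (⌊Γ⌋₊ : ℝ) #S) := by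
      rw [hsplit]
      refine le_min ?_ ?_
      · exact (sum_le_sum_of_subset_of_nonneg (subset_univ S) fun i _ _ => (hu i).1).trans hu_sum
      · simpa using sum_le_sum fun i (_ : i ∈ S) => (hu i).2
    simp only [hd, hsum]
    gcongr
    exact sum_mul_le_sum_kthLargest S d0 (fun i _ => hd0 i) (fun i _ => hu i) hKS hSu

/-- the worst-case total duration of a subset `S` of tasks over the
budgeted uncertainty set is attained and given in closed form via the sorted nominal
durations. -/
theorem budget_subset_sum_sup
    (n : ℕ) (hn : 1 ≤ n) (d0 : Fin n → ℝ) (hd0 : ∀ i, 0 ≤ d0 i)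
    (α Γ : ℝ) (hα : 0 < α) (hΓ : 0 ≤ Γ) (S : Finset (Fin n)) :
    IsGreatest ((fun d => ∑ i ∈ S, d i) '' budgetU d0 α Γ)
      ((∑ i ∈ S, d0 i) + α *
        ((∑ k ∈ Finset.Icc 1 (min S.card ⌊Γ⌋₊), kthLargest S d0 k) +
          (min Γ (S.card : ℝ) - min (⌊Γ⌋₊ : ℝ) (S.card : ℝ)) *
            kthLargest S d0 (min S.card ⌊Γ⌋₊ + 1))) :=
  budget_subset_sum_sup_general n d0 hd0 α Γ hα hΓ S
end

section
/- Let n ≥ 1, let d⁰ ∈ ℝ^n, let α > 0 and 0 ≤ Γ ≤ n, and let U = U(d⁰, α, Γ) be the budgeted uncertainty set. Then PH(U) ≥ (1 + αΓ/n) · min_{x ∈ {0,1}^n} M(x, d⁰); that is, the perfect-hindsight worst-case makespan is at least the optimal deterministic two-machine makespan of the equally-perturbed duration vector (1 + αΓ/n) · d⁰. -/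
open Finset

/-- the perfect-hindsight worst-case makespan is at least the optimal
deterministic makespan of the equally-perturbed duration vector `(1 + αΓ/n) · d⁰`. -/
theorem PH_lower_bound_equal_split
    (n : ℕ) (hn : 1 ≤ n) (d0 : Fin n → ℝ)
    (α Γ : ℝ) (hα : 0 < α) (hΓ0 : 0 ≤ Γ) (hΓn : Γ ≤ (n : ℝ)) :
    (1 + α * Γ / (n : ℝ)) * (⨅ x : Fin n → Bool, M2 x d0) ≤
      PH (budgetU d0 α Γ) := by
  have hn' : (0:ℝ) < n := by exact_mod_cast hn
  set c : ℝ := 1 + α * Γ / n with hc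
  have hc0 : (0:ℝ) < c := by
    have : 0 ≤ α * Γ / n := by positivity
    rw [hc]; linarith
  set d : Fin n → ℝ := fun i => d0 i * c with hd
  have hdU : d ∈ budgetU d0 α Γ := by
    refine ⟨fun _ => Γ / n, fun i => ⟨by positivity, by
      rw [div_le_one hn']; exact hΓn⟩, fun i => by
      simp only [hd, hc]; ring_nf, ?_⟩
    rw [Finset.sum_const, Finset.card_univ, Fintype.card_fin, nsmul_eq_mul,
      mul_div_cancel₀ _ (ne_of_gt hn')]
  have hbb : ∀ d' : Fin n → ℝ, BddBelow (Set.range fun x : Fin n → Bool => M2 x d') :=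
    fun d' => (Set.finite_range _).bddBelow
  have hM2 : ∀ x : Fin n → Bool, M2 x d = c * M2 x d0 := by
    intro x
    simp only [M2, hd, ← Finset.sum_mul]
    rw [← max_mul_of_nonneg _ _ hc0.le, mul_comm]
  have hlb : c * (⨅ x : Fin n → Bool, M2 x d0) ≤ ⨅ x : Fin n → Bool, M2 x d := by
    apply le_ciInf
    intro x
    rw [hM2 x]
    exact mul_le_mul_of_nonneg_left (ciInf_le (hbb d0) x) hc0.le
  have habs : ∀ d' ∈ budgetU d0 α Γ, ∀ S : Finset (Fin n),
      ∑ i ∈ S, d' i ≤ ∑ i, |d0 i| * (1 + α) := by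
    rintro d' ⟨u, hu, hd', _⟩ S
    calc ∑ i ∈ S, d' i ≤ ∑ i ∈ S, |d' i| := Finset.sum_le_sum fun i _ => le_abs_self _
    _ ≤ ∑ i, |d' i| :=
        Finset.sum_le_sum_of_subset_of_nonneg (Finset.subset_univ S)
          (fun i _ _ => abs_nonneg _)
    _ ≤ ∑ i, |d0 i| * (1 + α) := by
        apply Finset.sum_le_sum
        intro i _
        rw [hd' i, abs_mul]
        have h1 : 0 ≤ 1 + α * u i := by nlinarith [(hu i).1]
        rw [abs_of_nonneg h1]
        have : 1 + α * u i ≤ 1 + α := by nlinarith [(hu i).2]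
        exact mul_le_mul_of_nonneg_left this (abs_nonneg _) |>.trans_eq rfl
  have hbdd : BddAbove ((fun d' => ⨅ x : Fin n → Bool, M2 x d') '' budgetU d0 α Γ) := by
    refine ⟨∑ i, |d0 i| * (1 + α), ?_⟩
    rintro v ⟨d', hd', rfl⟩
    refine (ciInf_le (hbb d') (fun _ => true)).trans ?_
    exact max_le (habs d' hd' _) (habs d' hd' _)
  have hmem : (⨅ x : Fin n → Bool, M2 x d) ∈
      ((fun d' => ⨅ x : Fin n → Bool, M2 x d') '' budgetU d0 α Γ) := ⟨d, hdU, rfl⟩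
  exact hlb.trans (le_csSup hbdd hmem)
end

section
/- Fix real numbers 0 < a̲ ≤ ā, α > 0 and Γ ≥ 0. For every ε > 0 there exists N such that for every n ≥ N with Γ ≤ n, and for every d⁰ ∈ ℝ^n with a̲ ≤ d⁰_i ≤ ā for all i, letting U = U(d⁰, α, Γ) be the budgeted uncertainty set, one has max_{1 ≤ j ≤ n} sup_{d ∈ U} ( (∑_{i=1}^n d_i)/2 + d_j/2 ) ≤ (1 + ε) · PH(U). (That is, as the number of tasks grows with the budget fixed, the worst-case makespan of any rolling-horizon implementation approaches the perfect-hindsight worst-case makespan.) -/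
open Finset

lemma half_sum_le_M2 {n : ℕ} (x : Fin n → Bool) (d : Fin n → ℝ) :
    (∑ i, d i) / 2 ≤ M2 x d := by
  have hsplit : (∑ i ∈ Finset.univ.filter (fun i => x i = true), d i)
      + (∑ i ∈ Finset.univ.filter (fun i => x i = false), d i) = ∑ i, d i := by
    rw [← Finset.sum_filter_add_sum_filter_not Finset.univ (fun i => x i = true) d]
    congr 1
    apply Finset.sum_congr _ (fun _ _ => rfl)
    apply Finset.filter_congr
    intro i _
    simp [Bool.not_eq_true]
  unfold M2
  rcases le_total (∑ i ∈ Finset.univ.filter (fun i => x i = true), d i)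
      (∑ i ∈ Finset.univ.filter (fun i => x i = false), d i) with h | h
  · have := le_max_right (∑ i ∈ Finset.univ.filter (fun i => x i = true), d i)
      (∑ i ∈ Finset.univ.filter (fun i => x i = false), d i)
    linarith
  · have := le_max_left (∑ i ∈ Finset.univ.filter (fun i => x i = true), d i)
      (∑ i ∈ Finset.univ.filter (fun i => x i = false), d i)
    linarith

lemma M2_le_sum {n : ℕ} (x : Fin n → Bool) (d : Fin n → ℝ) (hd : ∀ i, 0 ≤ d i) :
    M2 x d ≤ ∑ i, d i := by
  unfold M2
  apply max_le <;>
    exact Finset.sum_le_sum_of_subset_of_nonneg (Finset.filter_subset _ _)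
      (fun i _ _ => hd i)

/-- with the budget fixed, as the number of tasks grows, the worst-case
makespan of any rolling-horizon implementation approaches the perfect-hindsight
worst-case makespan. -/
theorem RH_asymptotically_optimal
    (la ua α Γ : ℝ) (hla : 0 < la) (hlu : la ≤ ua) (hα : 0 < α) (hΓ : 0 ≤ Γ) :
    ∀ ε > (0 : ℝ), ∃ N : ℕ, ∀ n : ℕ, N ≤ n → Γ ≤ (n : ℝ) →
      ∀ d0 : Fin n → ℝ, (∀ i, la ≤ d0 i ∧ d0 i ≤ ua) →
        (⨆ j : Fin n, sSup ((fun d => (∑ i, d i) / 2 + d j / 2) '' budgetU d0 α Γ)) ≤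
          (1 + ε) * PH (budgetU d0 α Γ) := by
  intro ε hε
  have hua : 0 < ua := lt_of_lt_of_le hla hlu
  set C : ℝ := α * Γ * ua + (1 + α) * ua with hCdef
  have hC0 : 0 ≤ C := by positivity
  refine ⟨max 1 ⌈C / (ε * la)⌉₊, ?_⟩
  intro n hn hΓn d0 hd0
  set U := budgetU d0 α Γ with hU
  set S0 : ℝ := ∑ i, d0 i with hS0def
  -- basic facts about elements of U
  have key : ∀ d ∈ U, (∀ i, 0 ≤ d i) ∧ (∀ i, d i ≤ (1 + α) * ua) ∧
      (∑ i, d i) ≤ S0 + α * Γ * ua := by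
    rintro d ⟨u, hu, hdu, hsum⟩
    have hu0 : ∀ i, 0 ≤ u i := fun i => (hu i).1
    have hu1 : ∀ i, u i ≤ 1 := fun i => (hu i).2
    refine ⟨?_, ?_, ?_⟩
    · intro i
      rw [hdu i]
      have h1 := (hd0 i).1
      have h2 := hu0 i
      have ha1 : 0 ≤ α * u i := mul_nonneg hα.le h2
      nlinarith
    · intro i
      rw [hdu i]
      have h1 := (hd0 i).1
      have h2 := (hd0 i).2
      have h3 := hu0 i
      have h4 := hu1 i
      have ha1 : 0 ≤ α * u i := mul_nonneg hα.le h3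
      have ha2 : α * u i ≤ α := by nlinarith
      have := mul_le_mul h2 (show 1 + α * u i ≤ 1 + α by linarith)
        (by linarith) hua.le
      nlinarith
    · have hstep : ∑ i, d i = S0 + α * ∑ i, d0 i * u i := by
        rw [hS0def, Finset.mul_sum, ← Finset.sum_add_distrib]
        exact Finset.sum_congr rfl (fun i _ => by rw [hdu i]; ring)
      rw [hstep]
      have h1 : ∑ i, d0 i * u i ≤ ∑ i, ua * u i :=
        Finset.sum_le_sum (fun i _ =>
          mul_le_mul_of_nonneg_right (hd0 i).2 ((hu i).1))
      have h2 : ∑ i, ua * u i = ua * ∑ i, u i := by rw [Finset.mul_sum]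
      have h3 : ua * ∑ i, u i ≤ ua * Γ := mul_le_mul_of_nonneg_left hsum (le_of_lt hua)
      nlinarith
  -- d0 ∈ U
  have hd0U : d0 ∈ U := by
    refine ⟨fun _ => 0, fun i => ⟨le_refl _, zero_le_one⟩, fun i => by ring, by simpa⟩
  -- PH lower bound
  have hPHlb : S0 / 2 ≤ PH U := by
    have hbdd : BddAbove ((fun d => ⨅ x : Fin n → Bool, M2 x d) '' U) := by
      refine ⟨S0 + α * Γ * ua, ?_⟩
      rintro y ⟨d, hd, rfl⟩
      obtain ⟨hnn, _, hsle⟩ := key d hd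
      have h1 : (⨅ x : Fin n → Bool, M2 x d) ≤ M2 (fun _ => true) d :=
        ciInf_le (Set.Finite.bddBelow (Set.finite_range _)) _
      exact le_trans h1 (le_trans (M2_le_sum _ _ hnn) hsle)
    have hmem : (⨅ x : Fin n → Bool, M2 x d0) ∈
        (fun d => ⨅ x : Fin n → Bool, M2 x d) '' U := ⟨d0, hd0U, rfl⟩
    have h2 : S0 / 2 ≤ ⨅ x : Fin n → Bool, M2 x d0 :=
      le_ciInf (fun x => half_sum_le_M2 x d0)
    exact le_trans h2 (le_csSup hbdd hmem)
  -- sum lower bound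
  have hS0lb : (n : ℝ) * la ≤ S0 := by
    have h := Finset.sum_le_sum (s := (Finset.univ : Finset (Fin n)))
      (f := fun _ : Fin n => la) (g := d0) (fun i _ => (hd0 i).1)
    simpa [hS0def, mul_comm] using h
  -- LHS upper bound
  have hLHS : (⨆ j : Fin n, sSup ((fun d => (∑ i, d i) / 2 + d j / 2) '' U)) ≤
      S0 / 2 + C / 2 := by
    have hB0 : 0 ≤ S0 / 2 + C / 2 := by
      have : (0:ℝ) ≤ S0 := le_trans (by positivity) hS0lb
      linarith
    apply Real.iSup_le _ hB0
    intro j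
    apply Real.sSup_le _ hB0
    rintro y ⟨d, hd, rfl⟩
    obtain ⟨_, hub, hsle⟩ := key d hd
    have := hub j
    simp only [hCdef]
    nlinarith
  -- numeric bound from N
  have hn' : C / (ε * la) ≤ (n : ℝ) := by
    have h1 : ⌈C / (ε * la)⌉₊ ≤ n := le_trans (le_max_right _ _) hn
    exact Nat.ceil_le.mp h1
  have hC_le : C ≤ (n : ℝ) * (ε * la) := by
    have hpos : 0 < ε * la := by positivity
    exact (div_le_iff₀ hpos).mp hn'
  -- conclude
  have hS0nn : (0:ℝ) ≤ S0 := le_trans (by positivity) hS0lb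
  have hPH0 : 0 ≤ PH U := le_trans (by linarith) hPHlb
  refine le_trans hLHS ?_
  have hεPH : C / 2 ≤ ε * PH U := by
    have h1 : ε * (S0 / 2) ≤ ε * PH U := mul_le_mul_of_nonneg_left hPHlb (le_of_lt hε)
    nlinarith
  nlinarith
end
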